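/- arXiv:2007.06652 — 5 statements merged into one kernel-verified Lean document; each statement's English description precedes it below -/
import Mathlib

section
/- Let p be a prime and let λ and μ be partitions of n. If ν is a partition of n obtained from μ by replacing p parts all of equal size m with a single part of size pm, then the irreducible character value χ^λ of the symmetric group S_n satisfies χ^λ(μ) ≡ χ^λ(ν) (mod p), where χ^λ(μ) denotes the value of χ^λ on the conjugacy class of permutations with cycle type μ. -/
open scoped BigOperators

/-- The irreducible character value `χ^λ_μ` of the symmetric group `S_n`, defined via the
Frobenius character formula: `χ^λ(μ)` is the coefficient of
`x₁^(λ₁+n-1) x₂^(λ₂+n-2) ⋯ xₙ^(λₙ)` in `∏_{i<j} (xᵢ - xⱼ) · ∏_i p_{μᵢ}(x)`,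
where `p_m(x) = Σᵢ xᵢ^m` is the power sum. -/
noncomputable def charSn (n : ℕ) (lam mu : Nat.Partition n) : ℤ :=
  MvPolynomial.coeff
    (Finsupp.equivFunOnFinite.symm fun i : Fin n =>
      ((lam.parts.sort (· ≤ ·)).reverse.getD i 0) + (n - 1 - (i : ℕ)))
    ((∏ i : Fin n, ∏ j ∈ Finset.univ.filter (fun j : Fin n => (i : ℕ) < (j : ℕ)),
        (MvPolynomial.X i - MvPolynomial.X j)) *
      (mu.parts.map (fun m => ∑ i : Fin n, MvPolynomial.X i ^ m)).prod)

/-!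
Reduce the Frobenius formula modulo `p`. Over `ZMod p` the Frobenius endomorphism gives
`p_m ^ p = p_{pm}`, so merging `p` equal parts `m` of `μ` into one part `pm` does not change the
product of power sums `p_μ`, hence does not change any of its coefficients.
-/

theorem Multiset.prod_map_sub_replicate_add_singleton {α M : Type*} [DecidableEq α]
    [CommMonoid M] {g : α → M} {s : Multiset α} {a b : α} {k : ℕ}
    (hg : g a ^ k = g b) (hle : replicate k a ≤ s) :
    ((s - replicate k a + {b}).map g).prod = (s.map g).prod := by
  conv_rhs => rw [← tsub_add_cancel_of_le hle]
  simp only [map_add, prod_add, map_replicate, prod_replicate, map_singleton, prod_singleton, hg]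

namespace MvPolynomial

variable {σ R S : Type*} [Fintype σ]

theorem psum_pow_expChar [CommSemiring R] (p m : ℕ) [ExpChar R p] :
    psum σ R m ^ p = psum σ R (p * m) := by
  simp only [psum, sum_pow_char, ← pow_mul, mul_comm m p]

theorem map_psum [CommSemiring R] [CommSemiring S] (f : R →+* S) (m : ℕ) :
    map f (psum σ R m) = psum σ S m := by
  simp [psum]

theorem map_psumPart [CommSemiring R] [CommSemiring S] (f : R →+* S) {n : ℕ}
    (μ : n.Partition) : map f (psumPart σ R μ) = psumPart σ S μ := by
  simp only [psumPart, map_multiset_prod, Multiset.map_map, Function.comp_def, map_psum]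

theorem psumPart_eq_of_merge [CommSemiring R] (p : ℕ) [ExpChar R p] {n m : ℕ}
    {μ ν : n.Partition} (hle : Multiset.replicate p m ≤ μ.parts)
    (hν : ν.parts = μ.parts - Multiset.replicate p m + {p * m}) :
    psumPart σ R μ = psumPart σ R ν := by
  rw [psumPart, psumPart, hν,
    Multiset.prod_map_sub_replicate_add_singleton (psum_pow_expChar p m) hle]

end MvPolynomial

open MvPolynomial in
theorem intCast_charSn_eq_of_psumPart_eq {R : Type*} [CommRing R] {n : ℕ}
    (lam : n.Partition) {mu nu : n.Partition}
    (h : psumPart (Fin n) R mu = psumPart (Fin n) R nu) :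
    (charSn n lam mu : R) = charSn n lam nu := by
  simp only [charSn, ← eq_intCast (Int.castRingHom R), ← coeff_map, map_mul]
  change coeff _ (_ * map _ (psumPart (Fin n) ℤ mu)) = coeff _ (_ * map _ (psumPart (Fin n) ℤ nu))
  rw [map_psumPart, map_psumPart, h]

theorem char_modEq_of_merge_general (p : ℕ) (hp : p.Prime) (n m : ℕ)
    (lam mu nu : Nat.Partition n)
    (hle : Multiset.replicate p m ≤ mu.parts)
    (hnu : nu.parts = (mu.parts - Multiset.replicate p m) + {p * m}) :
    charSn n lam mu ≡ charSn n lam nu [ZMOD p] := by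
  have : Fact p.Prime := ⟨hp⟩
  rw [← ZMod.intCast_eq_intCast_iff]
  exact intCast_charSn_eq_of_psumPart_eq lam (MvPolynomial.psumPart_eq_of_merge p hle hnu)

/-- If `ν` is obtained from `μ` by replacing `p` parts of equal size `m` by a single part of
size `p*m`, then `χ^λ_μ ≡ χ^λ_ν (mod p)`. -/
theorem char_modEq_of_merge (p : ℕ) (hp : p.Prime) (n m : ℕ) (hm : 0 < m)
    (lam mu nu : Nat.Partition n)
    (hle : Multiset.replicate p m ≤ mu.parts)
    (hnu : nu.parts = (mu.parts - Multiset.replicate p m) + {p * m}) :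
    charSn n lam mu ≡ charSn n lam nu [ZMOD p] :=
  char_modEq_of_merge_general p hp n m lam mu nu hle hnu
end

section
/- Let λ and μ be partitions of n and let t be a positive integer. If μ has a part of size t and λ is a t-core (i.e., no box in the Young diagram of λ has hook length divisible by t), then χ^λ_μ = 0. -/
open scoped BigOperators

/-- The `i`-th largest part of `μ` (0-indexed), i.e. the length of row `i` of its Young diagram. -/
def rowLen {n : ℕ} (μ : Nat.Partition n) (i : ℕ) : ℕ :=
  ((μ.parts.sort (· ≤ ·)).reverse).getD i 0

/-- The length of column `j` (0-indexed) of the Young diagram of `μ`. -/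
def colLen {n : ℕ} (μ : Nat.Partition n) (j : ℕ) : ℕ :=
  (μ.parts.filter (fun a => j < a)).card

/-- The hook length of the box `(i,j)` (0-indexed) of the Young diagram of `μ`:
`1` plus the number of boxes to the right plus the number of boxes below. -/
def hookLen {n : ℕ} (μ : Nat.Partition n) (i j : ℕ) : ℕ :=
  (rowLen μ i - j) + (colLen μ j - i) - 1

/-!
By the Frobenius formula, `χ^λ_μ` is the coefficient of `x^β` in `Δ · p_μ`, where
`Δ = ∏_{i<j} (x_i - x_j)` and `β_k = λ_k + (n - 1 - k)` are the β-numbers of `λ`. Split off the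
factor `p_t = ∑ x_i ^ t` of `p_μ`: the coefficient of `x^β` in `x_i ^ t · Δ · p_{μ - t}` is that of
`x^(β - t e_i)` in the alternating polynomial `Δ · p_{μ - t}`. As `λ` is a `t`-core, `β_i - t` is
again a β-number `β_j` (a gap there would give a hook of length `t` in row `i`), so `β - t e_i`
has two equal entries, and there every coefficient of an alternating polynomial vanishes.
-/

open MvPolynomial Finset

section Diagram

variable {n : ℕ} (lam : Nat.Partition n)

theorem Nat.Partition.card_parts_le : Multiset.card lam.parts ≤ n :=
  calc Multiset.card lam.parts = Multiset.card lam.parts * 1 := (mul_one _).symm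
    _ ≤ lam.parts.sum := Multiset.card_nsmul_le_sum fun _ hx => lam.parts_pos hx
    _ = n := lam.parts_sum

theorem rowLen_antitone : Antitone (rowLen lam) := by
  intro i j hij
  unfold rowLen
  set l := (lam.parts.sort (· ≤ ·)).reverse
  by_cases hj : j < l.length
  · rw [List.getD_eq_getElem l 0 hj, List.getD_eq_getElem l 0 (hij.trans_lt hj)]
    have hl : l.Pairwise (· ≥ ·) := List.pairwise_reverse.2 (lam.parts.pairwise_sort _)
    exact hl.rel_get_of_le (a := ⟨i, hij.trans_lt hj⟩) (b := ⟨j, hj⟩) hij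
  · rw [List.getD_eq_default l 0 (not_lt.1 hj)]
    exact Nat.zero_le _

theorem parts_eq_map_rowLen :
    lam.parts = (Multiset.range (Multiset.card lam.parts)).map (rowLen lam) := by
  set l := (lam.parts.sort (· ≤ ·)).reverse
  have hparts : lam.parts = ↑l := by rw [Multiset.coe_reverse, Multiset.sort_eq]
  have hl : l = (List.range l.length).map (l.getD · 0) :=
    List.ext_getElem (by simp) fun k hk _ => by simp [hk]
  rw [hparts, Multiset.coe_card, Multiset.range, Multiset.map_coe]
  exact congrArg _ hl

theorem colLen_eq_card_filter_range (j : ℕ) :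
    colLen lam j = #{k ∈ range n | j < rowLen lam k} := by
  have hrow : ∀ k, Multiset.card lam.parts ≤ k → rowLen lam k = 0 := fun k hk =>
    List.getD_eq_default _ 0 (by simpa using hk)
  rw [colLen, parts_eq_map_rowLen lam, Multiset.filter_map, Multiset.card_map]
  show #{k ∈ range _ | j < rowLen lam k} = _
  congr 1
  ext k
  simp only [mem_filter, mem_range]
  constructor
  · exact fun ⟨hk, hj⟩ => ⟨hk.trans_le lam.card_parts_le, hj⟩
  · intro ⟨_, hj⟩
    refine ⟨not_le.1 fun hk => ?_, hj⟩
    rw [hrow k hk] at hj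
    exact Nat.not_lt_zero _ hj

/-- The β-numbers `λ_k + (n - 1 - k)`, `k < n`: the exponents of the monomial in `charSn`. -/
def betaNum (k : ℕ) : ℕ :=
  rowLen lam k + (n - 1 - k)

theorem betaNum_add_le {a b : ℕ} (hab : a ≤ b) (hb : b < n) :
    betaNum lam b + (b - a) ≤ betaNum lam a := by
  have := rowLen_antitone lam hab
  unfold betaNum
  omega

theorem lt_betaNum_iff_lt_card {y k : ℕ} (hy : ∀ l < n, betaNum lam l ≠ y) (hk : k < n) :
    y < betaNum lam k ↔ k < #{l ∈ range n | y < betaNum lam l} := by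
  constructor
  · intro hyk
    have hsub : range (k + 1) ⊆ {l ∈ range n | y < betaNum lam l} := fun l hl => by
      rw [mem_range] at hl
      have := betaNum_add_le lam (Nat.lt_succ_iff.1 hl) hk
      simp only [mem_filter, mem_range]
      omega
    simpa using card_le_card hsub
  · intro hkm
    by_contra hyk
    have hky : betaNum lam k < y := lt_of_le_of_ne (not_lt.1 hyk) (hy k hk)
    have hsub : {l ∈ range n | y < betaNum lam l} ⊆ range k := fun l hl => by
      simp only [mem_filter, mem_range] at hl ⊢
      by_contra hkl
      have := betaNum_add_le lam (not_lt.1 hkl) hl.1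
      omega
    have := card_le_card hsub
    rw [card_range] at this
    omega

theorem exists_hookLen_eq_betaNum_sub {i y : ℕ} (hi : i < n) (hyi : y < betaNum lam i)
    (hy : ∀ k < n, betaNum lam k ≠ y) :
    ∃ j < rowLen lam i, hookLen lam i j = betaNum lam i - y := by
  obtain ⟨m, hm_def⟩ : ∃ m, #{k ∈ range n | y < betaNum lam k} = m := ⟨_, rfl⟩
  have hm : m ≤ n := hm_def ▸ (card_filter_le _ _).trans (card_range n).le
  have lt_betaNum_iff : ∀ k < n, y < betaNum lam k ↔ k < m := fun k hk =>
    hm_def ▸ lt_betaNum_iff_lt_card lam hy hk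
  have betaNum_lt : ∀ k, m ≤ k → k < n → betaNum lam k < y := fun k hmk hk =>
    (hy k hk).lt_or_gt.resolve_right fun h => hmk.not_gt ((lt_betaNum_iff k hk).1 h)
  have him : i < m := (lt_betaNum_iff i hi).1 hyi
  have hnm : n ≤ y + m := by
    rcases hm.lt_or_eq with hmn | rfl
    · have := betaNum_add_le lam (Nat.le_sub_one_of_lt hmn) (Nat.sub_one_lt_of_lt hmn)
      have := betaNum_lt m le_rfl hmn
      omega
    · omega
  -- The gap `y` sits in column `y + m - n`: the `m` rows above it reach past that column.
  have lt_rowLen_iff : ∀ k < n, y + m - n < rowLen lam k ↔ k < m := by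
    intro k hk
    constructor
    · intro hrow
      by_contra hkm
      have := betaNum_add_le lam (not_lt.1 hkm) hk
      have := betaNum_lt m le_rfl (lt_of_le_of_lt (not_lt.1 hkm) hk)
      unfold betaNum at *
      omega
    · intro hkm
      have := betaNum_add_le lam (Nat.le_sub_one_of_lt hkm) (by omega)
      have := (lt_betaNum_iff (m - 1) (by omega)).2 (by omega)
      unfold betaNum at *
      omega
  have hcol : colLen lam (y + m - n) = m := by
    rw [colLen_eq_card_filter_range]
    refine (congrArg card (filter_congr fun k hk => ?_)).trans hm_def
    rw [mem_range] at hk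
    rw [lt_rowLen_iff k hk, lt_betaNum_iff k hk]
  have hrow := (lt_rowLen_iff i hi).2 him
  refine ⟨y + m - n, hrow, ?_⟩
  unfold hookLen betaNum at *
  rw [hcol]
  omega

theorem exists_betaNum_add_eq_of_isCore {t i : ℕ} (ht : 0 < t)
    (hcore : ∀ i j, j < rowLen lam i → ¬ t ∣ hookLen lam i j) (hi : i < n)
    (hti : t ≤ betaNum lam i) : ∃ k < n, betaNum lam k + t = betaNum lam i := by
  by_contra! h
  obtain ⟨j, hj, hhook⟩ := exists_hookLen_eq_betaNum_sub lam hi (y := betaNum lam i - t)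
    (by omega) fun k hk heq => h k hk (by omega)
  exact hcore i j hj (by rw [hhook, Nat.sub_sub_self hti])

end Diagram

section Alternating

variable {R : Type*} [CommRing R] {n : ℕ}

theorem prod_X_sub_X_eq_det_vandermonde :
    (∏ i : Fin n, ∏ j ∈ univ.filter (fun j : Fin n => (i : ℕ) < (j : ℕ)),
        (X i - X j : MvPolynomial (Fin n) R)) =
      (Matrix.vandermonde fun i => -X i).det := by
  rw [Matrix.det_vandermonde]
  refine prod_congr rfl fun i _ => prod_congr (by ext j; simp) fun j _ => by ring

theorem rename_prod_X_sub_X (σ : Equiv.Perm (Fin n)) :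
    rename σ (∏ i : Fin n, ∏ j ∈ univ.filter (fun j : Fin n => (i : ℕ) < (j : ℕ)),
        (X i - X j : MvPolynomial (Fin n) R)) =
      Equiv.Perm.sign σ * ∏ i : Fin n, ∏ j ∈ univ.filter (fun j : Fin n => (i : ℕ) < (j : ℕ)),
        (X i - X j : MvPolynomial (Fin n) R) := by
  rw [prod_X_sub_X_eq_det_vandermonde, ← Matrix.det_permute, AlgHom.map_det]
  congr 1
  ext i j
  simp [Matrix.vandermonde_apply]

theorem coeff_eq_zero_of_rename_swap_eq_neg [NoZeroDivisors R] [CharZero R]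
    {G : MvPolynomial (Fin n) R} {a b : Fin n} (hG : rename (Equiv.swap a b) G = -G)
    {e : Fin n →₀ ℕ} (he : e a = e b) : coeff e G = 0 := by
  have he_swap : Finsupp.mapDomain (Equiv.swap a b) e = e := by
    ext x
    rw [Finsupp.mapDomain_equiv_apply, Equiv.symm_swap, Equiv.swap_apply_def]
    split_ifs with hxa hxb <;> simp [*]
  have := coeff_rename_mapDomain (Equiv.swap a b) (Equiv.injective _) G e
  rwa [he_swap, hG, coeff_neg, CharZero.neg_eq_self_iff] at this

end Alternating

theorem charSn_eq_coeff {n : ℕ} (lam mu : n.Partition) :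
    charSn n lam mu = coeff (Finsupp.equivFunOnFinite.symm fun i : Fin n => betaNum lam i)
      ((∏ i : Fin n, ∏ j ∈ univ.filter (fun j : Fin n => (i : ℕ) < (j : ℕ)), (X i - X j)) *
        psumPart (Fin n) ℤ mu) :=
  rfl

theorem exists_isSymmetric_psumPart_eq_psum_mul {σ R : Type*} [CommSemiring R] [Fintype σ]
    {n t : ℕ} {μ : n.Partition} (ht : t ∈ μ.parts) :
    ∃ Q : MvPolynomial σ R, Q.IsSymmetric ∧ psumPart σ R μ = psum σ R t * Q := by
  refine ⟨((μ.parts.erase t).map (psum σ R)).prod, ?_, ?_⟩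
  · refine (symmetricSubalgebra σ R).multiset_prod_mem fun p hp => ?_
    obtain ⟨m, -, rfl⟩ := Multiset.mem_map.1 hp
    exact psum_isSymmetric σ R m
  · rw [psumPart, ← Multiset.cons_erase ht, Multiset.map_cons, Multiset.prod_cons,
      Multiset.erase_cons_head]

theorem coeff_psum_mul_eq_zero {R : Type*} [CommRing R] [NoZeroDivisors R] [CharZero R] {n : ℕ}
    {G : MvPolynomial (Fin n) R} (hG : ∀ a b, a ≠ b → rename (Equiv.swap a b) G = -G)
    {t : ℕ} {e : Fin n →₀ ℕ} (he : ∀ i, t ≤ e i → ∃ j ≠ i, e j + t = e i) :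
    coeff e (psum (Fin n) R t * G) = 0 := by
  classical
  rw [psum, sum_mul, coeff_sum]
  refine sum_eq_zero fun i _ => ?_
  rw [X_pow_eq_monomial, coeff_monomial_mul']
  split_ifs with hti
  · obtain ⟨j, hji, hj⟩ := he i (by simpa using Finsupp.single_le_iff.1 hti)
    rw [one_mul]
    refine coeff_eq_zero_of_rename_swap_eq_neg (hG i j hji.symm) ?_
    simp only [Finsupp.tsub_apply, Finsupp.single_eq_same, Finsupp.single_eq_of_ne hji]
    omega
  · rfl

theorem char_eq_zero_of_core_general (n t : ℕ) (lam mu : Nat.Partition n)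
    (hpart : t ∈ mu.parts)
    (hcore : ∀ i j, j < rowLen lam i → ¬ t ∣ hookLen lam i j) :
    charSn n lam mu = 0 := by
  have ht : 0 < t := mu.parts_pos hpart
  obtain ⟨Q, hQ, hmu⟩ := exists_isSymmetric_psumPart_eq_psum_mul (R := ℤ) (σ := Fin n) hpart
  rw [charSn_eq_coeff, hmu, mul_left_comm]
  refine coeff_psum_mul_eq_zero (fun a b hab => ?_) fun i hti => ?_
  · rw [map_mul, rename_prod_X_sub_X, hQ, Equiv.Perm.sign_swap hab]
    simp
  · simp only [Finsupp.equivFunOnFinite_symm_apply_apply] at hti ⊢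
    obtain ⟨k, hk, hbeta⟩ := exists_betaNum_add_eq_of_isCore lam ht hcore i.2 hti
    exact ⟨⟨k, hk⟩, fun h => by simp [← h] at hbeta; omega, hbeta⟩

/-- If `μ` has a part of size `t` and `λ` is a `t`-core (no hook length divisible by `t`),
then `χ^λ_μ = 0`. -/
theorem char_eq_zero_of_core (n t : ℕ) (ht : 0 < t) (lam mu : Nat.Partition n)
    (hpart : t ∈ mu.parts)
    (hcore : ∀ i j, j < rowLen lam i → ¬ t ∣ hookLen lam i j) :
    charSn n lam mu = 0 :=
  char_eq_zero_of_core_general n t lam mu hpart hcore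
end

section
/- For every real r ∈ [0,1), there exists k ∈ {1, 3, 5} such that the fractional part {r − log₂ k} is at most log₂((1/log 2 − 1/100)/(1 + 1/100)). -/
/-!
Modulo 1 the numbers `log₂ 1, log₂ 5, log₂ 3` are `0 < log₂ (5/4) < log₂ (3/2)`, which cut the
circle `ℝ/ℤ` into arcs of lengths `log₂ (5/4)`, `log₂ (6/5)` and `log₂ (4/3)`. Hence every `r`
lies at most `log₂ (4/3) ≈ 0.415` above one of them, and `log₂ (4/3)` is below the given
constant `≈ 0.504` because `1 / log 2 > 10/7`.
-/

open Real

theorem Int.fract_le_of_add_intCast_le {R : Type*} [Ring R] [LinearOrder R] [IsOrderedRing R]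
    [FloorRing R] {x c : R} (n : ℤ) (h0 : 0 ≤ x + n) (hc : x + n ≤ c) (hc1 : c < 1) :
    Int.fract x ≤ c := by
  rw [← Int.fract_add_intCast x n, Int.fract_eq_self.2 ⟨h0, hc.trans_lt hc1⟩]
  exact hc

theorem exists_fract_sub_logb_two_le_logb_two_four_thirds (r : ℝ) :
    ∃ k ∈ ({1, 3, 5} : Finset ℕ), Int.fract (r - logb 2 k) ≤ logb 2 (4 / 3) := by
  have h3 : logb 2 3 = 1 + logb 2 (3 / 2) := by
    rw [← logb_self_eq_one one_lt_two, ← logb_mul two_ne_zero (by norm_num)]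
    norm_num
  have h5 : logb 2 5 = 2 + logb 2 (5 / 4) := by
    have h4 : logb 2 4 = 2 := by
      rw [show (4 : ℝ) = 2 ^ (2 : ℝ) by norm_num, logb_rpow two_pos (by norm_num)]
    nth_rw 2 [← h4]
    rw [← logb_mul (by norm_num) (by norm_num)]
    norm_num
  have h43 : logb 2 (4 / 3) = 1 - logb 2 (3 / 2) := by
    rw [← logb_self_eq_one one_lt_two, ← logb_div two_ne_zero (by norm_num)]
    norm_num
  have h54 : logb 2 (5 / 4) ≤ logb 2 (4 / 3) := logb_le_logb_of_le one_lt_two (by norm_num)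
    (by norm_num)
  have h65 : logb 2 (3 / 2) - logb 2 (5 / 4) ≤ logb 2 (4 / 3) := by
    rw [← logb_div (by norm_num) (by norm_num)]
    exact logb_le_logb_of_le one_lt_two (by norm_num) (by norm_num)
  have h32 : 0 < logb 2 (3 / 2) := logb_pos one_lt_two (by norm_num)
  have hfloor := Int.fract_add_floor r
  have hs0 := Int.fract_nonneg r
  have hs1 := Int.fract_lt_one r
  rcases le_or_gt (Int.fract r) (logb 2 (4 / 3)) with hs | hs
  · exact ⟨1, by simp, by simpa using hs⟩
  rcases le_or_gt (Int.fract r) (logb 2 (3 / 2)) with hs' | hs'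
  · refine ⟨5, by simp, Int.fract_le_of_add_intCast_le (2 - ⌊r⌋) ?_ ?_ ?_⟩ <;>
      push_cast <;> linarith
  · refine ⟨3, by simp, Int.fract_le_of_add_intCast_le (1 - ⌊r⌋) ?_ ?_ ?_⟩ <;>
      push_cast <;> linarith

theorem four_thirds_le_inv_log_two_sub_div :
    (4 : ℝ) / 3 ≤ (1 / log 2 - 1 / 100) / (1 + 1 / 100) := by
  have h : 10 / 7 ≤ 1 / log 2 := by
    rw [le_div_iff₀ (log_pos one_lt_two)]
    linarith [log_two_lt_d9]
  rw [le_div_iff₀ (by norm_num)]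
  linarith

theorem fract_le_for_some_k_general (r : ℝ) :
    ∃ k ∈ ({1, 3, 5} : Finset ℕ),
      Int.fract (r - Real.logb 2 k) ≤
        Real.logb 2 ((1 / Real.log 2 - 1 / 100) / (1 + 1 / 100)) := by
  obtain ⟨k, hk, hle⟩ := exists_fract_sub_logb_two_le_logb_two_four_thirds r
  exact ⟨k, hk, hle.trans
    (logb_le_logb_of_le one_lt_two (by norm_num) four_thirds_le_inv_log_two_sub_div)⟩

/-- For every `r ∈ [0,1)` there is `k ∈ {1,3,5}` with fractional part
`{r - log₂ k} ≤ log₂((1/log 2 - 1/100)/(1 + 1/100))`. -/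
theorem fract_le_for_some_k (r : ℝ) (h0 : 0 ≤ r) (h1 : r < 1) :
    ∃ k ∈ ({1, 3, 5} : Finset ℕ),
      Int.fract (r - Real.logb 2 k) ≤
        Real.logb 2 ((1 / Real.log 2 - 1 / 100) / (1 + 1 / 100)) :=
  fract_le_for_some_k_general r
end

section
/- Fix a prime p and an integer k coprime to p. The generating function identity Σ_{n≥0} (Σ_{μ ⊢ n} M_μ^{(k)}) x^n = P(x)·Σ_{j≥0} k·p^j·x^{k p^j}/(1 − x^{k p^j}) holds as an identity of formal power series, where P(x) = Π_{ℓ≥1} 1/(1−x^ℓ) is the generating function of the partition function and M_μ^{(k)} is the sum of the parts of μ of the form k·p^j. -/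
open scoped BigOperators

/-- `M_s^{(k)}`: the sum of the parts of `s` of the form `k·p^j`. -/
noncomputable def Msum (p k : ℕ) (s : Multiset ℕ) : ℕ :=
  letI := Classical.decPred fun a : ℕ => ∃ j : ℕ, a = k * p ^ j
  (s.filter fun a : ℕ => ∃ j : ℕ, a = k * p ^ j).sum

/-- `P(x) = Σ p(n) xⁿ`, the generating function of the partition function. -/
noncomputable def partitionGF : PowerSeries ℤ :=
  PowerSeries.mk fun n => (Nat.card (Nat.Partition n) : ℤ)

/-! The coefficient of `xⁿ` in `P(x) · x^m / (1 - x^m)` is `partCount n m`, the total number of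
parts equal to `m` over all partitions of `n`: the series `G = P · x^m / (1 - x^m)` satisfies
`G = x^m P + x^m G`, and deleting one part `m` from the partitions of `n` that contain it is a
bijection onto the partitions of `n - m`, which gives the matching recursion
`partCount n m = p(n - m) + partCount (n - m) m`. As `p > 1`, the numbers `k pʲ` are pairwise
distinct, so `M_μ^{(k)} = Σⱼ k pʲ · (multiplicity of k pʲ in μ)`; summing over `μ ⊢ n` gives the
identity. -/

open PowerSeries

noncomputable def partCount (n m : ℕ) : ℕ := ∑ μ : Nat.Partition n, μ.parts.count m

lemma partCount_eq_zero_of_lt {n m : ℕ} (h : n < m) : partCount n m = 0 :=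
  Finset.sum_eq_zero fun μ _ =>
    Multiset.count_eq_zero.2 fun hm => (μ.le_of_mem_parts hm).not_gt h

lemma partCount_eq_card_add_partCount_sub {n m : ℕ} (hm : 0 < m) (hmn : m ≤ n) :
    partCount n m = Nat.card (Nat.Partition (n - m)) + partCount (n - m) m := by
  classical
  have h_restrict :
      partCount n m = ∑ μ : {μ : Nat.Partition n // m ∈ μ.parts}, μ.1.parts.count m := by
    rw [partCount, ← Finset.sum_filter_of_ne fun μ _ h => Multiset.count_ne_zero.1 h,
      Finset.sum_subtype (p := fun μ : Nat.Partition n => m ∈ μ.parts) _ fun μ => by simp]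
  rw [h_restrict, ← (Nat.Partition.partitionWithPartEquiv hm hmn).symm.sum_comp]
  simp only [Nat.Partition.partitionWithPartEquiv_symm_apply_parts, Multiset.count_cons_self,
    Finset.sum_add_distrib, partCount, Finset.sum_const, Finset.card_univ, Nat.card_eq_fintype_card]
  ring

lemma coeff_mul_invOfUnit_one_sub_X_pow {R : Type*} [CommRing R] {m : ℕ} (hm : 0 < m)
    (f : R⟦X⟧) (n : ℕ) :
    coeff n (f * invOfUnit (1 - X ^ m) 1) =
      coeff n f + if m ≤ n then coeff (n - m) (f * invOfUnit (1 - X ^ m) 1) else 0 := by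
  set G := f * invOfUnit (1 - X ^ m) 1
  have hinv : (1 - X ^ m : R⟦X⟧) * invOfUnit (1 - X ^ m) 1 = 1 :=
    mul_invOfUnit _ _ (by simp [zero_pow hm.ne'])
  have hG : G = f + G * X ^ m := by
    linear_combination (f : R⟦X⟧) * hinv
  conv_lhs => rw [hG]
  rw [map_add, coeff_mul_X_pow']

lemma coeff_partitionGF_mul_X_pow_mul_invOfUnit {m : ℕ} (hm : 0 < m) (n : ℕ) :
    coeff n (partitionGF * X ^ m * invOfUnit (1 - X ^ m) 1) = (partCount n m : ℤ) := by
  induction n using Nat.strong_induction_on with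
  | _ n ih =>
    rw [coeff_mul_invOfUnit_one_sub_X_pow hm, coeff_mul_X_pow']
    by_cases hmn : m ≤ n
    · rw [if_pos hmn, if_pos hmn, ih (n - m) (by omega), partitionGF, coeff_mk,
        partCount_eq_card_add_partCount_sub hm hmn]
      push_cast
      rfl
    · rw [if_neg hmn, if_neg hmn, partCount_eq_zero_of_lt (by omega)]
      simp

lemma coeff_partitionGF_mul_C_mul_X_pow_mul_invOfUnit {m : ℕ} (hm : 0 < m) (n : ℕ) :
    coeff n (partitionGF * (C (m : ℤ) * X ^ m * invOfUnit (1 - X ^ m) 1)) =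
      (m : ℤ) * partCount n m := by
  rw [show partitionGF * (C (m : ℤ) * X ^ m * invOfUnit (1 - X ^ m) 1) =
    C (m : ℤ) * (partitionGF * X ^ m * invOfUnit (1 - X ^ m) 1) by ring,
    coeff_C_mul, coeff_partitionGF_mul_X_pow_mul_invOfUnit hm]

open Classical in
lemma Msum_cons (p k a : ℕ) (s : Multiset ℕ) :
    Msum p k (a ::ₘ s) = (if ∃ j, a = k * p ^ j then a else 0) + Msum p k s := by
  unfold Msum
  rw [Multiset.filter_cons, Multiset.sum_add]
  split_ifs <;> simp

open Classical in
lemma sum_range_ite_mul_pow_eq_ite_exists {p k a n : ℕ} (hp : 1 < p) (hk : 0 < k) (ha : a ≤ n) :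
    ∑ j ∈ Finset.range (n + 1), (if k * p ^ j = a then a else 0) =
      if ∃ j, a = k * p ^ j then a else 0 := by
  split_ifs with h
  · obtain ⟨j, rfl⟩ := h
    have hj : j ∈ Finset.range (n + 1) := by
      have : j < k * p ^ j := (Nat.lt_pow_self hp).trans_le (Nat.le_mul_of_pos_left _ hk)
      simp only [Finset.mem_range]; omega
    rw [Finset.sum_eq_single_of_mem j hj (fun i _ hij => if_neg fun h =>
      hij (Nat.pow_right_injective hp (Nat.eq_of_mul_eq_mul_left hk h))), if_pos rfl]
  · exact Finset.sum_eq_zero fun j _ => if_neg fun hj => h ⟨j, hj.symm⟩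

lemma Msum_eq_sum_range_count {p k n : ℕ} (hp : 1 < p) (hk : 0 < k) {s : Multiset ℕ}
    (hs : ∀ a ∈ s, a ≤ n) :
    Msum p k s = ∑ j ∈ Finset.range (n + 1), k * p ^ j * s.count (k * p ^ j) := by
  induction s using Multiset.induction with
  | empty => simp [Msum]
  | cons a s ih =>
    rw [Msum_cons, ih fun b hb => hs b (Multiset.mem_cons_of_mem hb),
      ← sum_range_ite_mul_pow_eq_ite_exists hp hk (hs a (Multiset.mem_cons_self a s)),
      ← Finset.sum_add_distrib]
    refine Finset.sum_congr rfl fun j _ => ?_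
    rw [Multiset.count_cons]
    split_ifs with h <;> simp [h, mul_add, add_comm]

theorem firstMoment_genFun_general (p k : ℕ) (hp : p.Prime) (hk0 : 0 < k) :
    ∀ n : ℕ,
      PowerSeries.coeff (R := ℤ) n
          (PowerSeries.mk fun n => ∑ μ : Nat.Partition n, (Msum p k μ.parts : ℤ)) =
        PowerSeries.coeff (R := ℤ) n
          (partitionGF *
            ∑ j ∈ Finset.range (n + 1),
              PowerSeries.C (R := ℤ) ((k * p ^ j : ℕ) : ℤ) * PowerSeries.X ^ (k * p ^ j) *
                PowerSeries.invOfUnit (1 - PowerSeries.X ^ (k * p ^ j)) 1) := by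
  intro n
  rw [coeff_mk, Finset.mul_sum, map_sum]
  calc ∑ μ : Nat.Partition n, (Msum p k μ.parts : ℤ)
      = ∑ μ : Nat.Partition n, ∑ j ∈ Finset.range (n + 1),
          ((k * p ^ j : ℕ) : ℤ) * μ.parts.count (k * p ^ j) := by
        refine Finset.sum_congr rfl fun μ _ => ?_
        rw [Msum_eq_sum_range_count hp.one_lt hk0 fun a => μ.le_of_mem_parts]
        push_cast; rfl
    _ = ∑ j ∈ Finset.range (n + 1), ((k * p ^ j : ℕ) : ℤ) * partCount n (k * p ^ j) := by
        rw [Finset.sum_comm]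
        simp only [← Finset.mul_sum, partCount, Nat.cast_sum]
    _ = _ := Finset.sum_congr rfl fun j _ =>
      (coeff_partitionGF_mul_C_mul_X_pow_mul_invOfUnit (Nat.mul_pos hk0 (pow_pos hp.pos j)) n).symm

/-- `Σₙ (Σ_{μ⊢n} M_μ^{(k)}) xⁿ = P(x) · Σ_j k pʲ x^{k pʲ}/(1 - x^{k pʲ})`. Both sides have the
same `n`-th coefficient for every `n`; on the right the sum over `j` is truncated at `j ≤ n`,
which does not affect the coefficient of `xⁿ` since the omitted summands have order `> n`. -/
theorem firstMoment_genFun (p k : ℕ) (hp : p.Prime) (hk0 : 0 < k) (hk : Nat.Coprime k p) :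
    ∀ n : ℕ,
      PowerSeries.coeff (R := ℤ) n
          (PowerSeries.mk fun n => ∑ μ : Nat.Partition n, (Msum p k μ.parts : ℤ)) =
        PowerSeries.coeff (R := ℤ) n
          (partitionGF *
            ∑ j ∈ Finset.range (n + 1),
              PowerSeries.C (R := ℤ) ((k * p ^ j : ℕ) : ℤ) * PowerSeries.X ^ (k * p ^ j) *
                PowerSeries.invOfUnit (1 - PowerSeries.X ^ (k * p ^ j)) 1) :=
  firstMoment_genFun_general p k hp hk0
end

section
/- Fix a prime p and an integer k coprime to p. Then Σ_{n≥0} (Σ_{μ ⊢ n} (M_μ^{(k)})²) x^n = P(x)·(F_k(x)² + Σ_{j≥0} k²·p^{2j}·x^{k p^j}/(1 − x^{k p^j})²) as formal power series, where F_k(x) = Σ_{j≥0} k p^j x^{k p^j}/(1 − x^{k p^j}). -/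
/-!
Write `c_a(μ)` for the multiplicity of the part `a` in `μ`. Since `s < c_a(μ)` exactly when `μ`
contains `s + 1` copies of `a`, and the partitions of `n` containing a fixed multiset `c` of parts
correspond to the partitions of `n - Σ c`, the sum `Σ_{μ ⊢ n} c_a(μ) c_b(μ)` (for `a ≠ b`) is a
sum of partition numbers `p(n - (s+1)a - (t+1)b)`, and `Σ_{μ ⊢ n} c_a(μ)²` is
`Σ_s (2s+1) p(n - (s+1)a)` because `c² = Σ_{s<c} (2s+1)`. These are the `n`-th coefficients of
`P(x)·x^{a+b}/((1-x^a)(1-x^b))` and `P(x)·(x^{2a} + x^a)/(1-x^a)²`: modulo `x^{n+1}` the geometric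
series may be truncated. Expanding `(M_μ^{(k)})² = (Σ_j k pʲ c_{k pʲ}(μ))²` gives the theorem.
-/

open scoped BigOperators

/-- The truncation (up to `j ≤ N`) of `F_k(x) = Σ_j k pʲ x^{k pʲ}/(1 - x^{k pʲ})`. -/
noncomputable def Fk (p k N : ℕ) : PowerSeries ℤ :=
  ∑ j ∈ Finset.range (N + 1),
    PowerSeries.C ((k * p ^ j : ℕ) : ℤ) * PowerSeries.X ^ (k * p ^ j) *
      PowerSeries.invOfUnit (1 - PowerSeries.X ^ (k * p ^ j)) 1

open Finset PowerSeries

section GeomSum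

variable {R : Type*} [CommRing R] {y u : R}

theorem pow_succ_dvd_mul_sub_sum_range (hu : (1 - y) * u = 1) (N : ℕ) :
    y ^ (N + 1) ∣ y * u - ∑ s ∈ range N, y ^ (s + 1) := by
  refine ⟨u, ?_⟩
  have hgeom := mul_neg_geom_sum y N
  have hshift : ∑ s ∈ range N, y ^ (s + 1) = y * ∑ s ∈ range N, y ^ s := by
    rw [mul_sum]; exact sum_congr rfl fun s _ => pow_succ' y s
  rw [hshift]
  linear_combination (y * ∑ s ∈ range N, y ^ s) * hu - (y * u) * hgeom

theorem one_sub_sq_mul_sum_range_odd_mul_pow (N : ℕ) :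
    (1 - y) ^ 2 * ∑ s ∈ range N, (2 * s + 1 : R) * y ^ (s + 1) =
      y + y ^ 2 - y ^ (N + 1) * ((2 * N + 1) - (2 * N - 1) * y) := by
  induction N with
  | zero => rw [sum_range_zero]; ring
  | succ N ih =>
    rw [sum_range_succ, mul_add, ih]
    push_cast
    ring

theorem pow_succ_dvd_sq_mul_sub_sum_range_odd_mul_pow (hu : (1 - y) * u = 1) (N : ℕ) :
    y ^ (N + 1) ∣ (y * u) ^ 2 + y * u ^ 2 - ∑ s ∈ range N, (2 * s + 1 : R) * y ^ (s + 1) := by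
  refine ⟨((2 * N + 1) - (2 * N - 1) * y) * u ^ 2, ?_⟩
  linear_combination (-u ^ 2) * one_sub_sq_mul_sum_range_odd_mul_pow (y := y) N +
    (∑ s ∈ range N, (2 * s + 1 : R) * y ^ (s + 1)) * ((1 - y) * u + 1) * hu

end GeomSum

theorem one_sub_X_pow_mul_invOfUnit {R : Type*} [Ring R] {a : ℕ} (ha : 0 < a) :
    (1 - X ^ a : R⟦X⟧) * invOfUnit (1 - X ^ a) 1 = 1 :=
  mul_invOfUnit _ _ (by simp [ha.ne'])

theorem X_pow_succ_dvd_pow_succ {R : Type*} [Semiring R] {a : ℕ} (ha : 0 < a) (n : ℕ) :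
    (X : R⟦X⟧) ^ (n + 1) ∣ (X ^ a) ^ (n + 1) := by
  rw [← pow_mul]
  exact pow_dvd_pow X (Nat.le_mul_of_pos_left _ ha)

theorem coeff_eq_of_X_pow_succ_dvd_sub {R : Type*} [Ring R] {n : ℕ} {φ ψ : R⟦X⟧}
    (h : X ^ (n + 1) ∣ φ - ψ) : coeff n φ = coeff n ψ := by
  rw [← sub_eq_zero, ← map_sub]
  exact X_pow_dvd_iff.mp h n n.lt_succ_self

theorem Finset.range_filter_lt_of_le {c n : ℕ} (h : c ≤ n) :
    (range n).filter (· < c) = range c := by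
  ext s
  simp only [mem_filter, mem_range]
  omega

theorem Nat.cast_eq_sum_range_ite_lt {c n : ℕ} (h : c ≤ n) :
    (c : ℤ) = ∑ s ∈ range n, if s < c then 1 else 0 := by
  rw [sum_boole, range_filter_lt_of_le h, card_range]

theorem Nat.sq_eq_sum_range_ite_lt {c n : ℕ} (h : c ≤ n) :
    (c : ℤ) ^ 2 = ∑ s ∈ range n, if s < c then (2 * s + 1 : ℤ) else 0 := by
  rw [← sum_filter, range_filter_lt_of_le h]
  induction c with
  | zero => simp
  | succ c ih =>
    rw [sum_range_succ, ← ih (by omega)]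
    push_cast
    ring

theorem Multiset.replicate_add_replicate_le_iff {α : Type*} [DecidableEq α] {a b : α}
    (hab : a ≠ b) {s t : ℕ} {u : Multiset α} :
    replicate s a + replicate t b ≤ u ↔ s ≤ u.count a ∧ t ≤ u.count b := by
  rw [Multiset.le_iff_count]
  refine ⟨fun h => ⟨by simpa [count_replicate, hab.symm] using h a,
    by simpa [count_replicate, hab] using h b⟩, ?_⟩
  rintro ⟨hs, ht⟩ x
  simp only [count_add, count_replicate]
  split_ifs <;> grind

theorem Multiset.sum_filter_mem {α : Type*} [AddCommMonoid α] [DecidableEq α]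
    (s : Multiset α) (A : Finset α) :
    (s.filter (· ∈ A)).sum = ∑ a ∈ A, s.count a • a := by
  rw [Finset.sum_multiset_count_of_subset _ A fun a ha =>
    (Multiset.mem_filter.mp (Multiset.mem_toFinset.mp ha)).2]
  exact sum_congr rfl fun a ha => by rw [Multiset.count_filter_of_pos ha]

namespace Nat.Partition

def subPartsEquiv {n : ℕ} (c : Multiset ℕ) (hc : ∀ x ∈ c, 0 < x) (h : c.sum ≤ n) :
    {μ : Nat.Partition n // c ≤ μ.parts} ≃ Nat.Partition (n - c.sum) where
  toFun μ := ⟨μ.1.parts - c,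
    fun hx => μ.1.parts_pos (Multiset.mem_of_le (Multiset.sub_le_self _ _) hx), by
      have hsum := congrArg Multiset.sum (tsub_add_cancel_of_le μ.2)
      rw [Multiset.sum_add, μ.1.parts_sum] at hsum
      omega⟩
  invFun ν := ⟨⟨ν.parts + c, fun hx => (Multiset.mem_add.mp hx).elim ν.parts_pos (hc _), by
      rw [Multiset.sum_add, ν.parts_sum]
      omega⟩, Multiset.le_add_left _ _⟩
  left_inv μ := Subtype.ext (Nat.Partition.ext (tsub_add_cancel_of_le μ.2))
  right_inv ν := Nat.Partition.ext (by simp)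

theorem sum_ite_le_parts (n : ℕ) (c : Multiset ℕ) (hc : ∀ x ∈ c, 0 < x) :
    ∑ μ : Nat.Partition n, (if c ≤ μ.parts then 1 else 0 : ℤ) =
      coeff n (X ^ c.sum * partitionGF) := by
  classical
  rw [sum_boole, coeff_X_pow_mul', partitionGF]
  split_ifs with h
  · rw [coeff_mk, ← Fintype.card_subtype, Nat.card_eq_fintype_card,
      Fintype.card_congr (subPartsEquiv c hc h)]
  · rw [Nat.cast_eq_zero, Finset.card_eq_zero, filter_eq_empty_iff]
    intro μ _ hle
    obtain ⟨u, hu⟩ := Multiset.le_iff_exists_add.mp hle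
    have hsum := congrArg Multiset.sum hu
    rw [Multiset.sum_add, μ.parts_sum] at hsum
    omega

theorem count_parts_le {n : ℕ} (μ : Nat.Partition n) (a : ℕ) : μ.parts.count a ≤ n :=
  calc μ.parts.count a ≤ Multiset.card μ.parts := Multiset.count_le_card _ _
    _ ≤ μ.parts.sum := by simpa using Multiset.card_nsmul_le_sum fun x hx => μ.parts_pos hx
    _ = n := μ.parts_sum

theorem sum_count_mul_count_of_ne {a b : ℕ} (ha : 0 < a) (hb : 0 < b) (hab : a ≠ b) (n : ℕ) :
    ∑ μ : Nat.Partition n, (μ.parts.count a * μ.parts.count b : ℤ) =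
      coeff n (partitionGF * (∑ s ∈ range n, (X ^ a) ^ (s + 1)) *
        ∑ t ∈ range n, (X ^ b) ^ (t + 1)) := by
  calc ∑ μ : Nat.Partition n, (μ.parts.count a * μ.parts.count b : ℤ)
      = ∑ μ : Nat.Partition n, ∑ s ∈ range n, ∑ t ∈ range n,
          if Multiset.replicate (s + 1) a + Multiset.replicate (t + 1) b ≤ μ.parts then 1
          else 0 := by
        refine sum_congr rfl fun μ _ => ?_
        rw [Nat.cast_eq_sum_range_ite_lt (μ.count_parts_le a),
          Nat.cast_eq_sum_range_ite_lt (μ.count_parts_le b), sum_mul_sum]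
        simp only [ite_zero_mul_ite_zero, mul_one, Multiset.replicate_add_replicate_le_iff hab,
          Nat.succ_le_iff]
    _ = ∑ s ∈ range n, ∑ t ∈ range n,
          coeff n ((X ^ a) ^ (s + 1) * (X ^ b) ^ (t + 1) * partitionGF) := by
        rw [sum_comm]
        refine sum_congr rfl fun s _ => ?_
        rw [sum_comm]
        refine sum_congr rfl fun t _ => ?_
        rw [sum_ite_le_parts]
        · rw [Multiset.sum_add, Multiset.sum_replicate, Multiset.sum_replicate, smul_eq_mul,
            smul_eq_mul, pow_add, pow_mul', pow_mul']
        · intro x hx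
          rcases Multiset.mem_add.mp hx with hx | hx <;> rw [Multiset.eq_of_mem_replicate hx]
          exacts [ha, hb]
    _ = _ := by
        simp only [mul_sum, sum_mul, map_sum]
        rw [sum_comm]
        refine sum_congr rfl fun s _ => sum_congr rfl fun t _ => ?_
        ring_nf

theorem sum_count_sq {a : ℕ} (ha : 0 < a) (n : ℕ) :
    ∑ μ : Nat.Partition n, (μ.parts.count a : ℤ) ^ 2 =
      coeff n (partitionGF * ∑ s ∈ range n, (2 * s + 1 : ℤ⟦X⟧) * (X ^ a) ^ (s + 1)) := by
  calc ∑ μ : Nat.Partition n, (μ.parts.count a : ℤ) ^ 2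
      = ∑ μ : Nat.Partition n, ∑ s ∈ range n,
          if Multiset.replicate (s + 1) a ≤ μ.parts then (2 * s + 1 : ℤ) else 0 := by
        refine sum_congr rfl fun μ _ => ?_
        rw [Nat.sq_eq_sum_range_ite_lt (μ.count_parts_le a)]
        simp only [← Multiset.le_count_iff_replicate_le, Nat.succ_le_iff]
    _ = ∑ s ∈ range n, (2 * s + 1 : ℤ) * coeff n ((X ^ a) ^ (s + 1) * partitionGF) := by
        rw [sum_comm]
        refine sum_congr rfl fun s _ => ?_
        rw [show (X ^ a) ^ (s + 1) = (X : ℤ⟦X⟧) ^ (Multiset.replicate (s + 1) a).sum by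
            rw [Multiset.sum_replicate, smul_eq_mul, pow_mul'],
          ← sum_ite_le_parts _ _ fun x hx => Multiset.eq_of_mem_replicate hx ▸ ha, mul_sum]
        simp only [mul_ite, mul_one, mul_zero]
    _ = _ := by
        simp only [mul_sum, map_sum]
        refine sum_congr rfl fun s _ => ?_
        rw [show (2 * s + 1 : ℤ⟦X⟧) = C (2 * s + 1 : ℤ) by simp, mul_left_comm, coeff_C_mul,
          mul_comm partitionGF]

theorem sum_count_mul_count {a b : ℕ} (ha : 0 < a) (hb : 0 < b) (n : ℕ) :
    ∑ μ : Nat.Partition n, (μ.parts.count a * μ.parts.count b : ℤ) =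
      coeff n (partitionGF * (X ^ a * invOfUnit (1 - X ^ a) 1) *
          (X ^ b * invOfUnit (1 - X ^ b) 1)) +
        if a = b then coeff n (partitionGF * (X ^ a * invOfUnit (1 - X ^ a) 1 ^ 2)) else 0 := by
  by_cases hab : a = b
  · subst hab
    rw [if_pos rfl, ← map_add]
    simp only [← sq, sum_count_sq ha]
    refine coeff_eq_of_X_pow_succ_dvd_sub ?_
    have htrunc := (X_pow_succ_dvd_pow_succ ha n).trans
      (pow_succ_dvd_sq_mul_sub_sum_range_odd_mul_pow (one_sub_X_pow_mul_invOfUnit (R := ℤ) ha) n)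
    rw [← dvd_neg]
    convert htrunc.mul_left partitionGF using 1
    ring
  · rw [if_neg hab, add_zero, sum_count_mul_count_of_ne ha hb hab]
    refine coeff_eq_of_X_pow_succ_dvd_sub ?_
    have htrunc {c : ℕ} (hc : 0 < c) := (X_pow_succ_dvd_pow_succ hc n).trans
      (pow_succ_dvd_mul_sub_sum_range (one_sub_X_pow_mul_invOfUnit (R := ℤ) hc) n)
    rw [← dvd_neg]
    convert (((htrunc ha).mul_right (X ^ b * invOfUnit (1 - X ^ b) 1)).add
      ((htrunc hb).mul_left (∑ s ∈ range n, (X ^ a) ^ (s + 1)))).mul_left partitionGF using 1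
    ring

theorem sum_sq_sum_mul_count (A : Finset ℕ) (hA : ∀ a ∈ A, 0 < a) (w : ℕ → ℤ)
    (n : ℕ) :
    ∑ μ : Nat.Partition n, (∑ a ∈ A, w a * μ.parts.count a) ^ 2 =
      coeff n (partitionGF * ((∑ a ∈ A, C (w a) * X ^ a * invOfUnit (1 - X ^ a) 1) ^ 2 +
        ∑ a ∈ A, C (w a ^ 2) * X ^ a * invOfUnit (1 - X ^ a) 1 ^ 2)) := by
  calc ∑ μ : Nat.Partition n, (∑ a ∈ A, w a * μ.parts.count a) ^ 2
      = ∑ a ∈ A, ∑ b ∈ A,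
          w a * w b * ∑ μ : Nat.Partition n, (μ.parts.count a * μ.parts.count b : ℤ) := by
        simp only [sq, sum_mul_sum]
        rw [sum_comm]
        refine sum_congr rfl fun a _ => ?_
        rw [sum_comm]
        refine sum_congr rfl fun b _ => ?_
        rw [mul_sum]
        exact sum_congr rfl fun μ _ => by ring
    _ = ∑ a ∈ A, ∑ b ∈ A, w a * w b *
          (coeff n (partitionGF * (X ^ a * invOfUnit (1 - X ^ a) 1) *
              (X ^ b * invOfUnit (1 - X ^ b) 1)) +
            if a = b then coeff n (partitionGF * (X ^ a * invOfUnit (1 - X ^ a) 1 ^ 2)) else 0) :=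
        sum_congr rfl fun a ha => sum_congr rfl fun b hb => by
          rw [sum_count_mul_count (hA a ha) (hA b hb)]
    _ = _ := by
        rw [sq, sum_mul_sum, mul_add, map_add]
        simp only [mul_add, sum_add_distrib, mul_ite, mul_zero, sum_ite_eq, sum_ite_mem, inter_self,
          mul_sum, map_sum]
        congr 1
        · refine sum_congr rfl fun a _ => sum_congr rfl fun b _ => ?_
          rw [← coeff_C_mul, map_mul C]
          congr 1
          ring
        · refine sum_congr rfl fun a _ => ?_
          rw [← sq, ← coeff_C_mul]
          congr 1
          ring

end Nat.Partition

theorem Msum_eq_sum_count {p k n : ℕ} (hp : 1 < p) (hk : 0 < k) {s : Multiset ℕ}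
    (hs : ∀ x ∈ s, x ≤ n) :
    Msum p k s = ∑ a ∈ (range (n + 1)).image (k * p ^ ·), s.count a • a := by
  classical
  rw [Msum, ← Multiset.sum_filter_mem]
  congr 1
  refine Multiset.filter_congr fun x hx => ⟨?_, ?_⟩
  · rintro ⟨j, rfl⟩
    have hj : j < n + 1 := by
      have hxn := hs _ hx
      have hjp := Nat.lt_pow_self hp (n := j)
      have hpk := Nat.le_mul_of_pos_left (p ^ j) hk
      omega
    exact mem_image.mpr ⟨j, mem_range.mpr hj, rfl⟩
  · intro hx
    obtain ⟨j, -, rfl⟩ := mem_image.mp hx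
    exact ⟨j, rfl⟩

theorem secondMoment_genFun_general (p k : ℕ) (hp : p.Prime) (hk0 : 0 < k) :
    ∀ n : ℕ,
      PowerSeries.coeff n
          (PowerSeries.mk fun n => ∑ μ : Nat.Partition n, ((Msum p k μ.parts : ℤ)) ^ 2) =
        PowerSeries.coeff n
          (partitionGF *
            (Fk p k n ^ 2 +
              ∑ j ∈ Finset.range (n + 1),
                PowerSeries.C (((k * p ^ j : ℕ) : ℤ) ^ 2) * PowerSeries.X ^ (k * p ^ j) *
                  (PowerSeries.invOfUnit (1 - PowerSeries.X ^ (k * p ^ j)) 1) ^ 2)) := by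
  intro n
  have hinj : Set.InjOn (k * p ^ ·) (range (n + 1)) := fun i _ j _ h =>
    Nat.pow_right_injective hp.two_le (Nat.eq_of_mul_eq_mul_left hk0 h)
  have hpos : ∀ a ∈ (range (n + 1)).image (k * p ^ ·), 0 < a := by
    simp only [mem_image]
    rintro a ⟨j, -, rfl⟩
    exact Nat.mul_pos hk0 (pow_pos hp.pos j)
  rw [Fk,
    ← sum_image (f := fun a : ℕ => C (a : ℤ) * X ^ a * invOfUnit (1 - X ^ a) 1) hinj,
    ← sum_image (f := fun a : ℕ => C ((a : ℤ) ^ 2) * X ^ a * invOfUnit (1 - X ^ a) 1 ^ 2) hinj,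
    ← Nat.Partition.sum_sq_sum_mul_count _ hpos, coeff_mk]
  refine sum_congr rfl fun μ _ => ?_
  rw [Msum_eq_sum_count hp.one_lt hk0 fun x hx => μ.le_of_mem_parts hx]
  simp [mul_comm]

/-- `Σₙ (Σ_{μ⊢n} (M_μ^{(k)})²) xⁿ = P(x)·(F_k(x)² + Σ_j k² p^{2j} x^{k pʲ}/(1 - x^{k pʲ})²)`:
equality of `n`-th coefficients for every `n`, with the sums over `j` truncated at `j ≤ n`
(the omitted summands have order `> n`). -/
theorem secondMoment_genFun (p k : ℕ) (hp : p.Prime) (hk0 : 0 < k) (hk : Nat.Coprime k p) :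
    ∀ n : ℕ,
      PowerSeries.coeff n
          (PowerSeries.mk fun n => ∑ μ : Nat.Partition n, ((Msum p k μ.parts : ℤ)) ^ 2) =
        PowerSeries.coeff n
          (partitionGF *
            (Fk p k n ^ 2 +
              ∑ j ∈ Finset.range (n + 1),
                PowerSeries.C (((k * p ^ j : ℕ) : ℤ) ^ 2) * PowerSeries.X ^ (k * p ^ j) *
                  (PowerSeries.invOfUnit (1 - PowerSeries.X ^ (k * p ^ j)) 1) ^ 2)) :=
  secondMoment_genFun_general p k hp hk0
end
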